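/- If Γ is a symmetric positive definite matrix and t, s ≥ 0, the SHEK covariance Cov(t,s) = (σ²/2)(e^{−Γ|t−s|} − e^{−Γ(t+s)})Γ⁻¹ is symmetric positive semidefinite when t = s, i.e., (σ²/2)(I − e^{−2Γt})Γ⁻¹ is symmetric PSD. -/

import Mathlib

/-!
Both factors of `(1 - exp (-2tΓ)) Γ⁻¹` are functions of `Γ`, so the product is `f(Γ)` for
`f(x) = (1 - e^{-2tx}) / x` in the continuous functional calculus. This `f` is nonnegative on
the spectrum of `Γ`, which consists of positive reals, hence `f(Γ)` is positive semidefinite.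
-/

open Matrix
open scoped ComplexOrder

variable {n 𝕜 : Type*} [RCLike 𝕜] [Fintype n] [DecidableEq n] {A : Matrix n n 𝕜}

namespace Matrix

theorem IsHermitian.exp_eq_cfc (hA : A.IsHermitian) : NormedSpace.exp A = cfc Real.exp A := by
  -- `exp` only depends on the topology, so any algebra norm inducing it will do.
  let _ := Matrix.linftyOpNormedRing (n := n) (α := 𝕜)
  let _ := Matrix.linftyOpNormedAlgebra (n := n) (α := 𝕜) (R := ℝ)
  exact (@CFC.real_exp_eq_normedSpace_exp _ _ _ _ IsHermitian.instContinuousFunctionalCalculus _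
    hA.isSelfAdjoint).symm

theorem IsHermitian.exp_smul_eq_cfc (hA : A.IsHermitian) (s : ℝ) :
    NormedSpace.exp (s • A) = cfc (fun x => Real.exp (s * x)) A := by
  rw [(hA.smul (IsSelfAdjoint.all s)).exp_eq_cfc, cfc_comp_const_mul s Real.exp A]

theorem IsHermitian.inv_eq_cfc (hA : A.IsHermitian) (hu : IsUnit A) :
    A⁻¹ = cfc (fun x : ℝ => x⁻¹) A := by
  rw [nonsing_inv_eq_ringInverse, cfc_ringInverse_id A hu hA.isSelfAdjoint]

theorem PosDef.pos_of_mem_spectrum (hA : A.PosDef) {x : ℝ} (hx : x ∈ spectrum ℝ A) :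
    0 < x := by
  obtain ⟨i, rfl⟩ := hA.isHermitian.spectrum_real_eq_range_eigenvalues ▸ hx
  exact hA.eigenvalues_pos i

theorem IsHermitian.one_sub_exp_smul_mul_inv_eq_cfc (hA : A.IsHermitian) (hu : IsUnit A)
    (s : ℝ) :
    (1 - NormedSpace.exp (s • A)) * A⁻¹ = cfc (fun x => (1 - Real.exp (s * x)) * x⁻¹) A := by
  have : IsSelfAdjoint A := hA.isSelfAdjoint
  rw [hA.exp_smul_eq_cfc, hA.inv_eq_cfc hu,
    cfc_mul _ _ A (hg := (Set.toFinite _).continuousOn _), cfc_sub _ _ A,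
    cfc_const_one ℝ A]

theorem PosDef.posSemidef_one_sub_exp_neg_smul_mul_inv (hA : A.PosDef) {s : ℝ} (hs : 0 ≤ s) :
    ((1 - NormedSpace.exp (-s • A)) * A⁻¹).PosSemidef := by
  open scoped MatrixOrder in
  rw [← nonneg_iff_posSemidef, hA.isHermitian.one_sub_exp_smul_mul_inv_eq_cfc hA.isUnit]
  refine cfc_nonneg fun x hx => ?_
  have hx : 0 < x := hA.pos_of_mem_spectrum hx
  have : Real.exp (-s * x) ≤ 1 := Real.exp_le_one_iff.mpr (by nlinarith)
  exact mul_nonneg (sub_nonneg.mpr this) (inv_nonneg.mpr hx.le)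

end Matrix

theorem shek_diagonal_cov_posSemidef (n : ℕ) (Γ : Matrix (Fin n) (Fin n) ℝ)
    (hsymm : Γᵀ = Γ) (hpd : ∀ x : Fin n → ℝ, x ≠ 0 → 0 < x ⬝ᵥ Γ.mulVec x)
    (σ t : ℝ) (ht : 0 ≤ t) :
    ((σ ^ 2 / 2) • (((1 : Matrix (Fin n) (Fin n) ℝ) - NormedSpace.exp (-(2 * t) • Γ)) * Γ⁻¹))ᵀ
        = (σ ^ 2 / 2) • (((1 : Matrix (Fin n) (Fin n) ℝ) - NormedSpace.exp (-(2 * t) • Γ)) * Γ⁻¹)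
      ∧ ∀ x : Fin n → ℝ,
        0 ≤ x ⬝ᵥ ((σ ^ 2 / 2) • (((1 : Matrix (Fin n) (Fin n) ℝ) - NormedSpace.exp (-(2 * t) • Γ)) * Γ⁻¹)).mulVec x := by
  have hΓ : Γ.PosDef := posDef_iff_dotProduct_mulVec.mpr
    ⟨by rwa [IsHermitian, conjTranspose_eq_transpose_of_trivial],
      fun x hx => by simpa using hpd x hx⟩
  have hcov := (hΓ.posSemidef_one_sub_exp_neg_smul_mul_inv (by positivity : 0 ≤ 2 * t)).smul
    (by positivity : 0 ≤ σ ^ 2 / 2)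
  refine ⟨?_, fun x => by simpa using hcov.dotProduct_mulVec_nonneg x⟩
  simpa only [IsHermitian, conjTranspose_eq_transpose_of_trivial] using hcov.isHermitian
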